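/- If κ is a strong limit cardinal and δ is the least cardinal such that 2^δ ≥ cf(κ), then 𝔰𝔡(δ,κ) = 2^κ. In particular, if κ is strongly inaccessible then 𝔰𝔡(κ,κ) = 2^κ, and hence 𝔰𝔡(δ,κ) = 2^κ for all infinite δ ≤ κ. -/

import Mathlib

universe u

open Cardinal

/-- `F` shatters `A` if every function `A → Bool` extends to an element of `F`. -/
def Shatters {X : Type u} (F : Set (X → Bool)) (A : Set X) : Prop :=
  ∀ g : X → Bool, ∃ f ∈ F, ∀ a ∈ A, f a = g a

/-- The string dimension of `F`: the least cardinal `δ` such that `F` shatters no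
set of cardinality `δ`. -/
noncomputable def sdim {X : Type u} (F : Set (X → Bool)) : Cardinal.{u} :=
  sInf {δ : Cardinal.{u} | ∀ A : Set X, #A = δ → ¬ Shatters F A}

/-- `𝔰𝔡(δ,κ)`: the least cardinality of a family of subsets of `2^κ`, each of string
dimension `< δ`, whose union is all of `2^κ`. -/
noncomputable def StringCov (δ κ : Cardinal.{u}) : Cardinal.{u} :=
  sInf {c : Cardinal.{u} | ∃ 𝒜 : Set (Set (Quotient.out κ → Bool)),
    #𝒜 = c ∧ (∀ F ∈ 𝒜, sdim F < δ) ∧ ⋃₀ 𝒜 = Set.univ}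

/-!
A point `x ∈ 2^κ` is coded by its answers `u (x ↾ i)` to all tests `(i, u)` with `i < κ` and
`u : 2^i → 2`; for a strong limit `κ` there are only `κ` tests, so this codes `2^κ` into itself.
Fewer than `cf κ` distinct points are already distinct below a common level `i`, and then, for
`2^μ` of them indexed by the patterns `μ → 2`, the `μ` tests at level `i` that read off one
coordinate of the pattern are shattered by their codes. Hence if `2^κ` is covered by fewer than
`2^κ` families, one family contains `κ` codes and so shatters sets of every size `μ` with
`2^μ < cf κ`; the singletons give the cover of size `2^κ`.
-/

open Set Function

theorem Shatters.mono {X : Type u} {F G : Set (X → Bool)} {A : Set X} (h : Shatters F A)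
    (hFG : F ⊆ G) : Shatters G A := fun g =>
  let ⟨f, hf, hfg⟩ := h g
  ⟨f, hFG hf, hfg⟩

theorem Shatters.comp_equiv {X Y : Type u} {F : Set (Y → Bool)} {A : Set Y} (h : Shatters F A)
    (e : X ≃ Y) : Shatters ((· ∘ e) '' F) (e ⁻¹' A) := by
  intro g
  obtain ⟨f, hf, hfg⟩ := h (g ∘ e.symm)
  exact ⟨f ∘ e, mem_image_of_mem _ hf, fun a ha => by simpa using hfg (e a) ha⟩

theorem not_shatters_of_mk_eq_sdim {X : Type u} (F : Set (X → Bool)) {A : Set X}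
    (hA : #A = sdim F) : ¬ Shatters F A := by
  have hne : {δ : Cardinal.{u} | ∀ A : Set X, #A = δ → ¬ Shatters F A}.Nonempty :=
    ⟨Order.succ #X, fun A hA _ => (mk_set_le A).not_gt (hA ▸ Order.lt_succ _)⟩
  exact csInf_mem hne A hA

theorem sdim_singleton_le_one {X : Type u} (f : X → Bool) : sdim {f} ≤ 1 := by
  refine csInf_le' fun A hA hsh => ?_
  obtain ⟨x, hx⟩ : A.Nonempty := by
    rw [← nonempty_coe_sort, ← mk_ne_zero_iff, hA]
    exact one_ne_zero
  obtain ⟨_, rfl, hf⟩ := hsh fun y => !f y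
  simpa using hf x hx

theorem mk_arrow_bool (X : Type u) : #(X → Bool) = 2 ^ #X := by
  simp

theorem aleph0_le_cof_ord {κ : Cardinal} (hκ : ℵ₀ ≤ κ) : ℵ₀ ≤ κ.ord.cof :=
  Ordinal.aleph0_le_cof_iff.2 (Ordinal.one_lt_cof_iff.2 (isSuccLimit_ord hκ))

theorem exists_injective_domRestrict_Iio {O T : Type u} {β : Type*} [LinearOrder O]
    (hO : ℵ₀ ≤ Order.cof O) {w : T → O → β} (hw : Injective w) (hT : #T < Order.cof O) :
    ∃ i, Injective fun t => (Iio i).domRestrict (w t) := by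
  have hdiff (p : {p : T × T // p.1 ≠ p.2}) : ∃ j, w p.1.1 j ≠ w p.1.2 j :=
    Function.ne_iff.mp (hw.ne p.2)
  choose d hd using hdiff
  have hsmall : #(range d) < Order.cof O := calc
    #(range d) ≤ #(T × T) := mk_range_le.trans (mk_subtype_le _)
    _ = #T * #T := mk_prod _ _ |>.trans (by simp)
    _ < Order.cof O := mul_lt_of_lt hO hT hT
  obtain ⟨i, hi⟩ := not_isCofinal_iff.mp fun h => (Order.cof_le h).not_gt hsmall
  exact ⟨i, fun t t' h => by_contra fun hne =>
    hd ⟨(t, t'), hne⟩ (congrFun h ⟨_, hi _ (mem_range_self _)⟩)⟩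

abbrev LevelTest (O : Type u) [Preorder O] : Type u :=
  Σ i : O, ((Iio i → Bool) → Bool)

def evalTests {O : Type u} [Preorder O] (x : O → Bool) (p : LevelTest O) : Bool :=
  p.2 ((Iio p.1).domRestrict x)

theorem mk_levelTest {κ : Cardinal.{u}} (hκ : κ.IsStrongLimit) :
    #(LevelTest κ.ord.ToType) = κ := by
  refine le_antisymm ?_ ?_
  · dsimp only [LevelTest]
    rw [mk_sigma]
    calc sum (fun i : κ.ord.ToType => #((Iio i → Bool) → Bool))
        ≤ sum fun _ : κ.ord.ToType => κ := sum_le_sum _ _ fun i => by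
          rw [mk_arrow_bool, mk_arrow_bool]
          exact (hκ.isStrongPrelimit (hκ.isStrongPrelimit (by simpa using mk_Iio_lt i))).le
      _ = κ := by rw [sum_const', mk_ord_toType, mul_eq_self hκ.aleph0_le]
  · calc κ = #κ.ord.ToType := (mk_ord_toType κ).symm
      _ ≤ _ := mk_le_of_injective (f := fun i => (⟨i, fun _ => false⟩ : LevelTest _))
          fun _ _ => congrArg Sigma.fst

theorem exists_shatters_range_evalTests {O M : Type u} [Preorder O] (i : O)
    {w : (M → Bool) → O → Bool} (hw : Injective fun ε => (Iio i).domRestrict (w ε)) :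
    ∃ A : Set (LevelTest O), #A = #M ∧ Shatters (range fun ε => evalTests (w ε)) A := by
  let r := fun ε => (Iio i).domRestrict (w ε)
  -- the test `⟨i, u m⟩` recovers bit `m` of `ε` from the initial segment `r ε` of its code
  let u : M → (Iio i → Bool) → Bool := fun m t => invFun r t m
  have hu (ε : M → Bool) (m : M) : u m (r ε) = ε m := congrFun (leftInverse_invFun hw ε) m
  let a : M → LevelTest O := fun m => ⟨i, u m⟩
  have ha : Injective a := fun m m' h => by
    classical
    simpa [hu] using congrFun (sigma_mk_injective h) (r fun k => decide (k = m'))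
  refine ⟨range a, mk_range_eq a ha, fun g => ⟨evalTests (w (g ∘ a)), mem_range_self _, ?_⟩⟩
  rintro _ ⟨m, rfl⟩
  exact hu (g ∘ a) m

theorem exists_coding_shatters {κ : Cardinal.{u}} (hκ : κ.IsStrongLimit) :
    ∃ Φ : (κ.ord.ToType → Bool) → (Quotient.out κ → Bool),
      ∀ (F : Set (Quotient.out κ → Bool)) (μ : Cardinal.{u}), 2 ^ μ < κ.ord.cof →
        2 ^ μ ≤ #(Φ ⁻¹' F) → ∃ A : Set (Quotient.out κ), #A = μ ∧ Shatters F A := by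
  obtain ⟨e⟩ : Nonempty (Quotient.out κ ≃ LevelTest κ.ord.ToType) :=
    Cardinal.eq.mp (by rw [mk_out, mk_levelTest hκ])
  refine ⟨fun x => evalTests x ∘ e, fun F μ hμ hF => ?_⟩
  obtain ⟨w⟩ : Nonempty ((Quotient.out μ → Bool) ↪ (fun x => evalTests x ∘ e) ⁻¹' F) := by
    rwa [← le_def, mk_arrow_bool, mk_out]
  have hcof : ℵ₀ ≤ Order.cof κ.ord.ToType := by
    rw [Ordinal.cof_toType]
    exact aleph0_le_cof_ord hκ.aleph0_le
  obtain ⟨i, hi⟩ := exists_injective_domRestrict_Iio hcof (Subtype.val_injective.comp w.injective)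
    (by rwa [Ordinal.cof_toType, mk_arrow_bool, mk_out])
  obtain ⟨A, hA, hsh⟩ := exists_shatters_range_evalTests i hi
  refine ⟨e ⁻¹' A, by rw [mk_preimage_equiv, hA, mk_out], (hsh.comp_equiv e).mono ?_⟩
  rintro _ ⟨_, ⟨ε, rfl⟩, rfl⟩
  exact (w ε).2

theorem exists_le_mk_preimage_of_sUnion_eq_univ {α β : Type u} (Φ : α → β)
    {𝒜 : Set (Set β)} (h𝒜 : ⋃₀ 𝒜 = Set.univ) {κ : Cardinal.{u}} (hlt : #𝒜 * κ < #α) :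
    ∃ F ∈ 𝒜, κ ≤ #(Φ ⁻¹' F) := by
  by_contra! hsmall
  refine hlt.not_ge ?_
  calc #α = #(⋃ F : 𝒜, Φ ⁻¹' (F : Set β)) := by
        rw [← preimage_iUnion, ← sUnion_eq_iUnion, h𝒜, preimage_univ, mk_univ]
    _ ≤ #𝒜 * ⨆ F : 𝒜, #(Φ ⁻¹' (F : Set β)) := mk_iUnion_le _
    _ ≤ #𝒜 * κ := by
        gcongr
        exact ciSup_le' fun F => (hsmall F F.2).le

def StringCovers (δ κ : Cardinal.{u}) : Set Cardinal.{u} :=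
  {c | ∃ 𝒜 : Set (Set (Quotient.out κ → Bool)),
    #𝒜 = c ∧ (∀ F ∈ 𝒜, sdim F < δ) ∧ ⋃₀ 𝒜 = Set.univ}

theorem two_pow_mem_stringCovers {δ : Cardinal.{u}} (hδ : 1 < δ) (κ : Cardinal.{u}) :
    2 ^ κ ∈ StringCovers δ κ := by
  refine ⟨range fun f => {f}, ?_, ?_, sUnion_eq_univ_iff.mpr fun f => ⟨{f}, mem_range_self f, rfl⟩⟩
  · rw [mk_range_eq _ fun f g => singleton_eq_singleton_iff.mp, mk_arrow_bool, mk_out]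
  · rintro _ ⟨f, rfl⟩
    exact (sdim_singleton_le_one f).trans_lt hδ

theorem two_pow_le_of_mem_stringCovers {κ δ c : Cardinal.{u}} (hκ : κ.IsStrongLimit)
    (hδ : ∀ δ' < δ, 2 ^ δ' < κ.ord.cof) (hc : c ∈ StringCovers δ κ) : 2 ^ κ ≤ c := by
  obtain ⟨𝒜, rfl, hdim, hcover⟩ := hc
  by_contra! hlt
  obtain ⟨Φ, hΦ⟩ := exists_coding_shatters hκ
  have hsize : #𝒜 * κ < #(κ.ord.ToType → Bool) := by
    rw [mk_arrow_bool, mk_ord_toType]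
    exact mul_lt_of_lt (hκ.aleph0_le.trans (cantor κ).le) hlt (cantor κ)
  obtain ⟨F, hF, hlarge⟩ := exists_le_mk_preimage_of_sUnion_eq_univ Φ hcover hsize
  have hμ := hδ _ (hdim F hF)
  obtain ⟨A, hA, hsh⟩ := hΦ F _ hμ ((hμ.le.trans (Ordinal.cof_ord_le κ)).trans hlarge)
  exact not_shatters_of_mk_eq_sdim F hA hsh

theorem stringCov_eq_two_pow {κ δ : Cardinal.{u}} (hκ : κ.IsStrongLimit) (hδ1 : 1 < δ)
    (hδ : ∀ δ' < δ, 2 ^ δ' < κ.ord.cof) : StringCov δ κ = 2 ^ κ :=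
  le_antisymm (csInf_le' (two_pow_mem_stringCovers hδ1 κ))
    (le_csInf ⟨_, two_pow_mem_stringCovers hδ1 κ⟩ fun _ => two_pow_le_of_mem_stringCovers hκ hδ)

/-- If `κ` is a strong limit and `δ` is least with `2^δ ≥ cf(κ)`, then
`𝔰𝔡(δ,κ) = 2^κ`. In particular if `κ` is strongly inaccessible then `𝔰𝔡(κ,κ) = 2^κ`,
and hence `𝔰𝔡(δ,κ) = 2^κ` for all infinite `δ ≤ κ`. -/
theorem stmt14 (κ : Cardinal.{u}) (hκ : κ.IsStrongLimit) :
    (∀ δ : Cardinal.{u},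
      ((Cardinal.ord κ).cof ≤ 2 ^ δ ∧ ∀ δ' < δ, 2 ^ δ' < (Cardinal.ord κ).cof) →
      StringCov δ κ = 2 ^ κ) ∧
    (κ.IsInaccessible →
      StringCov κ κ = 2 ^ κ ∧ ∀ δ : Cardinal.{u}, ℵ₀ ≤ δ → δ ≤ κ → StringCov δ κ = 2 ^ κ) := by
  refine ⟨fun δ ⟨hcof, hmin⟩ => stringCov_eq_two_pow hκ ?_ hmin, fun hin => ?_⟩
  · by_contra! hδ
    have h2 : 2 ^ δ < ℵ₀ := (power_le_power_left two_ne_zero hδ).trans_lt (by simp)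
    exact ((aleph0_le_cof_ord hκ.aleph0_le).trans hcof).not_gt h2
  · have hsmall (δ : Cardinal.{u}) (hδ : δ ≤ κ) : ∀ δ' < δ, 2 ^ δ' < κ.ord.cof := by
      rw [hin.isRegular.cof_ord]
      exact fun δ' hδ' => hκ.isStrongPrelimit (hδ'.trans_le hδ)
    exact ⟨stringCov_eq_two_pow hκ (one_lt_aleph0.trans_le hκ.aleph0_le) (hsmall κ le_rfl),
      fun δ hδ hle => stringCov_eq_two_pow hκ (one_lt_aleph0.trans_le hδ) (hsmall δ hle)⟩
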